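/- The bicyclic monoid B = ⟨a, b ∣ ab = 1⟩ has a faithful tropical linear representation of dimension 2: there exists an injective multiplicative-semigroup homomorphism R : B → M_2(𝕋) with R(a) = [[−1, 1],[−∞, 1]], R(b) = [[1, 1],[−∞, −1]], and R(1) = [[0,0],[−∞,0]] (so R(b)^i·R(a)^j, products taken tropically, represents b^i a^j, and distinct elements of B have distinct images). -/

import Mathlib

/-!
Every element of `B` has a unique normal form `b^i a^j`, and normal forms multiply by
`(b^i a^j)(b^k a^l) = b^(i + (k - j)) a^(l + (j - k))` (truncated subtraction). Uniqueness holds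
because this multiplication on `ℕ × ℕ` satisfies `ab = 1`, so the presentation maps onto it,
with the normal-form word as a left inverse.

The representation sends `b^i a^j` to `[[i - j, i + j], [-∞, j - i]]`. Tropical products of upper
triangular matrices add the diagonals, which matches `i - j` being a homomorphism to `ℤ`; the
corner entry of the product is `max (i - j + k + l) (i + j + l - k) = i + l + |k - j|`, the length
of the normal form of the product, matching the corner `i + j`. The entries `i - j` and `i + j`
recover `(i, j)`, so the representation is faithful.
-/

/-- The tropical semiring `𝕋 = ℝ ∪ {−∞}` (addition = max, multiplication = +,
with `⊥ = −∞` absorbing for `+`). -/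
abbrev Trop : Type := WithBot ℝ

/-- Tropical product of 2×2 matrices: `(A⊙B)_{ik} = max_j (a_{ij} + b_{jk})`. -/
noncomputable def tmul (A B : Matrix (Fin 2) (Fin 2) Trop) : Matrix (Fin 2) (Fin 2) Trop :=
  Matrix.of fun i k => max (A i 0 + B 0 k) (A i 1 + B 1 k)

/-- The single defining relation of the bicyclic monoid `⟨a, b ∣ ab = 1⟩`:
the word `ab` (here `a` is generator `0` and `b` is generator `1`) equals the empty word. -/
def bicyclicRel : FreeMonoid (Fin 2) → FreeMonoid (Fin 2) → Prop :=
  fun u v => u = FreeMonoid.of 0 * FreeMonoid.of 1 ∧ v = 1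

/-- The bicyclic monoid `B = ⟨a, b ∣ ab = 1⟩`, as a presented monoid. -/
abbrev Bicyclic : Type := PresentedMonoid bicyclicRel

namespace Bicyclic

@[ext]
structure NormalForm where
  i : ℕ
  j : ℕ

namespace NormalForm

instance : Mul NormalForm := ⟨fun p q => ⟨p.i + (q.i - p.j), q.j + (p.j - q.i)⟩⟩

instance : One NormalForm := ⟨⟨0, 0⟩⟩

@[simp] lemma mul_i (p q : NormalForm) : (p * q).i = p.i + (q.i - p.j) := rfl

@[simp] lemma mul_j (p q : NormalForm) : (p * q).j = q.j + (p.j - q.i) := rfl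

@[simp] lemma one_i : (1 : NormalForm).i = 0 := rfl

@[simp] lemma one_j : (1 : NormalForm).j = 0 := rfl

instance : Monoid NormalForm where
  mul_assoc p q r := by ext <;> simp <;> omega
  one_mul p := by ext <;> simp
  mul_one p := by ext <;> simp

def a : NormalForm := ⟨0, 1⟩

def b : NormalForm := ⟨1, 0⟩

lemma a_mul_b : a * b = 1 := rfl

end NormalForm

def a : Bicyclic := PresentedMonoid.of bicyclicRel 0

def b : Bicyclic := PresentedMonoid.of bicyclicRel 1

lemma a_mul_b : a * b = 1 :=
  PresentedMonoid.mk_eq_mk_of_rel ⟨rfl, rfl⟩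

noncomputable def toNormalForm : Bicyclic →* NormalForm :=
  PresentedMonoid.lift ![NormalForm.a, NormalForm.b] <| by
    rintro u v ⟨rfl, rfl⟩
    simpa using NormalForm.a_mul_b

def ofNormalForm (p : NormalForm) : Bicyclic := b ^ p.i * a ^ p.j

lemma ofNormalForm_a_mul (p : NormalForm) :
    ofNormalForm (NormalForm.a * p) = a * ofNormalForm p := by
  obtain ⟨_ | k, j⟩ := p
  · simp [ofNormalForm, NormalForm.a, pow_succ']
  · calc ofNormalForm (NormalForm.a * ⟨k + 1, j⟩) = b ^ k * a ^ j := by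
          simp [ofNormalForm, NormalForm.a]
      _ = (a * b) * b ^ k * a ^ j := by rw [a_mul_b, one_mul]
      _ = a * ofNormalForm ⟨k + 1, j⟩ := by simp only [ofNormalForm, pow_succ', mul_assoc]

lemma ofNormalForm_b_mul (p : NormalForm) :
    ofNormalForm (NormalForm.b * p) = b * ofNormalForm p := by
  simp [ofNormalForm, NormalForm.b, pow_succ', add_comm 1, mul_assoc]

lemma ofNormalForm_toNormalForm (x : Bicyclic) : ofNormalForm (toNormalForm x) = x := by
  induction x using PresentedMonoid.inductionOn with | h w => ?_
  induction w using FreeMonoid.inductionOn' with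
  | one => simp [ofNormalForm]
  | of_mul g w ih =>
    rw [map_mul, map_mul]
    fin_cases g
    · exact (ofNormalForm_a_mul _).trans (congrArg (a * ·) ih)
    · exact (ofNormalForm_b_mul _).trans (congrArg (b * ·) ih)

lemma toNormalForm_injective : Function.Injective toNormalForm :=
  Function.LeftInverse.injective ofNormalForm_toNormalForm

end Bicyclic

def upperTrop (x y z : ℝ) : Matrix (Fin 2) (Fin 2) Trop :=
  !![(x : Trop), (y : Trop); ⊥, (z : Trop)]

lemma tmul_upperTrop (x y z x' y' z' : ℝ) :
    tmul (upperTrop x y z) (upperTrop x' y' z') =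
      upperTrop (x + x') (max (x + y') (y + z')) (z + z') := by
  ext r s
  fin_cases r <;> fin_cases s <;> simp [tmul, upperTrop]

lemma upperTrop_inj {x y z x' y' z' : ℝ} :
    upperTrop x y z = upperTrop x' y' z' ↔ x = x' ∧ y = y' ∧ z = z' := by
  refine ⟨fun h => ?_, by rintro ⟨rfl, rfl, rfl⟩; rfl⟩
  have entry (r s : Fin 2) := congrFun (congrFun h r) s
  simpa [upperTrop] using And.intro (entry 0 0) (And.intro (entry 0 1) (entry 1 1))

namespace Bicyclic

noncomputable def tropRep (p : NormalForm) : Matrix (Fin 2) (Fin 2) Trop :=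
  upperTrop ((p.i : ℝ) - p.j) ((p.i : ℝ) + p.j) ((p.j : ℝ) - p.i)

lemma tropRep_injective : Function.Injective tropRep := by
  intro p q h
  obtain ⟨hx, hy, -⟩ := upperTrop_inj.mp h
  ext
  · exact_mod_cast (by linarith : (p.i : ℝ) = q.i)
  · exact_mod_cast (by linarith : (p.j : ℝ) = q.j)

lemma tropRep_mul (p q : NormalForm) : tropRep (p * q) = tmul (tropRep p) (tropRep q) := by
  rw [tropRep, tropRep, tropRep, tmul_upperTrop, upperTrop_inj]
  rcases le_total p.j q.i with h | h
  · simp only [NormalForm.mul_i, NormalForm.mul_j, Nat.sub_eq_zero_of_le h, Nat.cast_add,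
      Nat.cast_sub h, add_zero]
    rw [max_eq_left (by linarith [(Nat.cast_le (α := ℝ)).mpr h])]
    refine ⟨?_, ?_, ?_⟩ <;> ring
  · simp only [NormalForm.mul_i, NormalForm.mul_j, Nat.sub_eq_zero_of_le h, Nat.cast_add,
      Nat.cast_sub h, add_zero]
    rw [max_eq_right (by linarith [(Nat.cast_le (α := ℝ)).mpr h])]
    refine ⟨?_, ?_, ?_⟩ <;> ring

end Bicyclic

open Bicyclic in
/-- The bicyclic monoid has a faithful 2-dimensional tropical linear representation:
an injective multiplicative map `R : B → M₂(𝕋)` (a semigroup homomorphism for the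
tropical matrix product) with `R a = [[−1,1],[−∞,1]]`, `R b = [[1,1],[−∞,−1]]` and
`R 1 = [[0,0],[−∞,0]]`. -/
theorem stmt18 :
    ∃ R : Bicyclic → Matrix (Fin 2) (Fin 2) Trop,
      Function.Injective R ∧
      (∀ x y : Bicyclic, R (x * y) = tmul (R x) (R y)) ∧
      R (PresentedMonoid.of bicyclicRel 0) =
        !![((-1 : ℝ) : Trop), ((1 : ℝ) : Trop); (⊥ : Trop), ((1 : ℝ) : Trop)] ∧
      R (PresentedMonoid.of bicyclicRel 1) =
        !![((1 : ℝ) : Trop), ((1 : ℝ) : Trop); (⊥ : Trop), ((-1 : ℝ) : Trop)] ∧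
      R 1 = !![(0 : Trop), (0 : Trop); (⊥ : Trop), (0 : Trop)] := by
  refine ⟨tropRep ∘ toNormalForm, tropRep_injective.comp toNormalForm_injective,
    fun x y => by simp [tropRep_mul], ?_, ?_, ?_⟩
  · show tropRep NormalForm.a = _
    norm_num [tropRep, NormalForm.a, upperTrop]
  · show tropRep NormalForm.b = _
    norm_num [tropRep, NormalForm.b, upperTrop]
  · show tropRep 1 = _
    norm_num [tropRep, upperTrop]
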